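/- arXiv:1610.03547 — 5 statements merged into one kernel-verified Lean document; each statement's English description precedes it below -/
import Mathlib

section
/- Let β : ℤ₊^d → ℝ be a multisequence whose moment matrix M(β) defines a positive semidefinite bilinear form, i.e. pᵀ M(β) p ≥ 0 for all polynomials p. If a polynomial p satisfies M(β) pⁿ = 0 for some n ≥ 1 (meaning ∑_j (pⁿ)_j β_{i+j} = 0 for all multi-indices i), then M(β) p = 0. -/
/-!
With the Riesz functional `L_β`, `M(β) q = 0` says that `L_β` vanishes on the ideal `(q)`, and
positivity makes `(a, b) ↦ L_β (a * b)` a positive semidefinite form. By Cauchy–Schwarz its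
isotropic vectors lie in its radical, so if `(p^(k+1))` is annihilated and `k ≥ 1`, then
`L_β (p^k * p^k) = L_β (p^(k-1) * p^(k+1)) = 0` and `(p^k)` is annihilated too; descend to `k = 1`.
-/

open MvPolynomial

/-- The vector `M(β) p`, with `i`-th entry `∑_j p_j β_{i+j}`. -/
noncomputable def momentVec (d : ℕ) (β : (Fin d →₀ ℕ) → ℝ) (p : MvPolynomial (Fin d) ℝ) :
    (Fin d →₀ ℕ) → ℝ :=
  fun i => ∑ j ∈ p.support, coeff j p * β (i + j)

namespace LinearMap

variable {A : Type*} [CommRing A] [Algebra ℝ A] {L : A →ₗ[ℝ] ℝ}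

/-- `t ↦ L ((t • a + b) * (t • a + b))` is affine in `t` and nonnegative, hence constant. -/
theorem apply_mul_eq_zero_of_apply_mul_self_eq_zero (hL : ∀ a, 0 ≤ L (a * a)) {a : A}
    (ha : L (a * a) = 0) (b : A) : L (b * a) = 0 := by
  have haffine : ∀ t : ℝ, 0 ≤ 0 * (t * t) + 2 * L (b * a) * t + L (b * b) := by
    intro t
    have hexpand : (t • a + b) * (t • a + b) = (t * t) • (a * a) + (2 * t) • (b * a) + b * b := by
      simp only [Algebra.smul_def, map_mul, map_ofNat]
      ring
    have := hL (t • a + b)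
    rw [hexpand, map_add, map_add, map_smul, map_smul, ha, smul_eq_mul, smul_eq_mul] at this
    linarith
  have hdiscrim := discrim_le_zero haffine
  rw [discrim] at hdiscrim
  nlinarith [sq_nonneg (L (b * a))]

theorem forall_apply_mul_pow_eq_zero_of_succ (hL : ∀ a, 0 ≤ L (a * a)) {a : A} {k : ℕ}
    (hk : 1 ≤ k) (h : ∀ r, L (r * a ^ (k + 1)) = 0) (r : A) : L (r * a ^ k) = 0 := by
  refine apply_mul_eq_zero_of_apply_mul_self_eq_zero hL ?_ r
  have hsplit : a ^ k * a ^ k = a ^ (k - 1) * a ^ (k + 1) := by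
    rw [← pow_add, ← pow_add]
    congr 1
    omega
  rw [hsplit, h]

theorem forall_apply_mul_eq_zero_of_pow (hL : ∀ a, 0 ≤ L (a * a)) {a : A} {n : ℕ}
    (hn : 1 ≤ n) (h : ∀ r, L (r * a ^ n) = 0) (r : A) : L (r * a) = 0 := by
  induction n, hn using Nat.le_induction generalizing r with
  | base => simpa using h r
  | succ k hk ih => exact ih (forall_apply_mul_pow_eq_zero_of_succ hL hk h) r

end LinearMap

namespace MvPolynomial

variable {σ : Type*} (β : (σ →₀ ℕ) → ℝ)

/-- The Riesz functional `L_β (∑ c_m x^m) = ∑ c_m β_m`. -/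
noncomputable def rieszFunctional : MvPolynomial σ ℝ →ₗ[ℝ] ℝ :=
  Finsupp.linearCombination ℝ β ∘ₗ (AddMonoidAlgebra.coeffLinearEquiv ℝ).toLinearMap

theorem rieszFunctional_monomial (i : σ →₀ ℕ) (c : ℝ) :
    rieszFunctional β (monomial i c) = c * β i :=
  Finsupp.linearCombination_single ℝ c i

theorem rieszFunctional_mul (p q : MvPolynomial σ ℝ) :
    rieszFunctional β (p * q) =
      ∑ i ∈ p.support, ∑ j ∈ q.support, coeff i p * coeff j q * β (i + j) := by
  conv_lhs => rw [← support_sum_monomial_coeff p, ← support_sum_monomial_coeff q]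
  simp only [Finset.sum_mul_sum, map_sum, monomial_mul, rieszFunctional_monomial]

theorem forall_rieszFunctional_mul_eq_zero_iff (q : MvPolynomial σ ℝ) :
    (∀ r, rieszFunctional β (r * q) = 0) ↔
      ∀ i, rieszFunctional β (monomial i 1 * q) = 0 := by
  refine ⟨fun h i => h _, fun h r => ?_⟩
  induction r using MvPolynomial.induction_on' with
  | monomial i c =>
    have hsmul : monomial i c = c • monomial i (1 : ℝ) := by rw [smul_monomial, smul_eq_mul, mul_one]
    rw [hsmul, smul_mul_assoc, map_smul, h, smul_zero]
  | add r s hr hs => rw [add_mul, map_add, hr, hs, add_zero]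

end MvPolynomial

theorem momentVec_apply (d : ℕ) (β : (Fin d →₀ ℕ) → ℝ) (q : MvPolynomial (Fin d) ℝ)
    (i : Fin d →₀ ℕ) : momentVec d β q i = rieszFunctional β (monomial i 1 * q) := by
  simp [momentVec, rieszFunctional_mul, support_monomial, coeff_monomial]

theorem momentVec_eq_zero_iff (d : ℕ) (β : (Fin d →₀ ℕ) → ℝ) (q : MvPolynomial (Fin d) ℝ) :
    momentVec d β q = 0 ↔ ∀ r, rieszFunctional β (r * q) = 0 := by
  rw [forall_rieszFunctional_mul_eq_zero_iff, funext_iff]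
  simp only [momentVec_apply, Pi.zero_apply]

/-- If the moment matrix form is positive semidefinite and `M(β) pⁿ = 0` for some `n ≥ 1`,
then `M(β) p = 0`. -/
theorem momentVec_pow_zero (d : ℕ) (β : (Fin d →₀ ℕ) → ℝ)
    (hpsd : ∀ p : MvPolynomial (Fin d) ℝ,
      0 ≤ ∑ i ∈ p.support, ∑ j ∈ p.support, coeff i p * coeff j p * β (i + j))
    (p : MvPolynomial (Fin d) ℝ) (n : ℕ) (hn : 1 ≤ n)
    (h : momentVec d β (p ^ n) = 0) :
    momentVec d β p = 0 := by
  have hpos : ∀ q, 0 ≤ rieszFunctional β (q * q) := fun q => by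
    rw [rieszFunctional_mul]
    exact hpsd q
  rw [momentVec_eq_zero_iff] at h ⊢
  exact LinearMap.forall_apply_mul_eq_zero_of_pow hpos hn h
end

section
/- (Binet formula in d variables) Let β : ℤ₊^d → ℝ be a recursively generated multisequence with characteristic polynomials (p₁,…,p_d), where each p_j(x) = ∏_{l=0}^{m_j−1}(x − λ_{j,l}) has m_j distinct complex roots. Then there exist complex numbers c_{(l₁,…,l_d)}, uniquely determined by the initial values {β_i : 0 ≤ i_j ≤ m_j − 1}, such that β_{(i₁,…,i_d)} = ∑_{l₁=0}^{m₁−1} ⋯ ∑_{l_d=0}^{m_d−1} c_{(l₁,…,l_d)} λ_{1,l₁}^{i₁} ⋯ λ_{d,l_d}^{i_d} for all (i₁,…,i_d) ∈ ℤ₊^d. -/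
/-!
The multisequences satisfying all `d` recurrences form a vector space `S`. Each recurrence can be
solved for its top term, so an element of `S` is determined by its values on the box
`∏ j, [0, m j)`, whence `dim S ≤ ∏ j, m j`. The `∏ j, m j` exponential multisequences
`i ↦ ∏ j, λ_{j,l_j} ^ i_j` lie in `S` and are distinct characters of the monoid `ℕ^d`, hence
linearly independent by Dedekind's theorem. So they form a basis of `S`, and `β ∈ S` has unique
coordinates in it.
-/

open Polynomial

variable {R ι : Type*}

section Monomials

variable [CommRing R] [Fintype ι]

def monomialFun (z : ι → R) (i : ι → ℕ) : R := ∏ j, z j ^ i j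

lemma monomialFun_add (z : ι → R) (i i' : ι → ℕ) :
    monomialFun z (i + i') = monomialFun z i * monomialFun z i' := by
  simp only [monomialFun, Pi.add_apply, pow_add, Finset.prod_mul_distrib]

lemma monomialFun_nsmul_single [DecidableEq ι] (z : ι → R) (k : ℕ) (j : ι) :
    monomialFun z (k • Pi.single j 1) = z j ^ k := by
  simp [monomialFun, Pi.single_apply]

def monomialChar (z : ι → R) : Multiplicative (ι → ℕ) →* R where
  toFun i := monomialFun z i.toAdd
  map_one' := by simp [monomialFun]
  map_mul' i i' := monomialFun_add z i i'

lemma linearIndependent_monomialFun [IsDomain R] :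
    LinearIndependent R (monomialFun : (ι → R) → (ι → ℕ) → R) := by
  classical
  have hinj : Function.Injective (monomialChar : (ι → R) → _) := fun z z' h ↦ funext fun j ↦ by
    simpa [monomialChar, monomialFun, Pi.single_apply] using
      DFunLike.congr_fun h (.ofAdd (Pi.single j 1))
  exact (linearIndependent_monoidHom _ R).comp _ hinj

end Monomials

section Recurrence

variable [CommRing R] [DecidableEq ι]

def recurrenceSolutions (m : ι → ℕ) (p : ι → R[X]) : Submodule R ((ι → ℕ) → R) where
  carrier := {f | ∀ j i, ∑ k ∈ Finset.range (m j + 1), (p j).coeff k * f (i + k • Pi.single j 1) = 0}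
  add_mem' hf hg j i := by
    simp only [Pi.add_apply, mul_add, Finset.sum_add_distrib, hf j i, hg j i, add_zero]
  zero_mem' := by simp
  smul_mem' a f hf j i := by
    simpa [mul_left_comm _ a, ← Finset.mul_sum] using congrArg (a * ·) (hf j i)

variable {m : ι → ℕ} {p : ι → R[X]}

lemma monomialFun_mem_recurrenceSolutions [Fintype ι] {z : ι → R}
    (hdeg : ∀ j, (p j).natDegree ≤ m j) (hz : ∀ j, (p j).IsRoot (z j)) :
    monomialFun z ∈ recurrenceSolutions m p := by
  intro j i
  simp_rw [monomialFun_add, monomialFun_nsmul_single, mul_left_comm _ (monomialFun z i),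
    ← Finset.mul_sum, ← eval_eq_sum_range' (Nat.lt_succ_of_le (hdeg j)), (hz j).eq_zero, mul_zero]

lemma eq_zero_of_mem_recurrenceSolutions [Finite ι] (hp : ∀ j, (p j).coeff (m j) = 1)
    {f : (ι → ℕ) → R} (hf : f ∈ recurrenceSolutions m p)
    (hbox : ∀ i, (∀ j, i j < m j) → f i = 0) : f = 0 := by
  funext i
  induction i using WellFoundedLT.induction with
  | ind i ih =>
  by_cases hi : ∀ j, i j < m j
  · exact hbox i hi
  push Not at hi
  obtain ⟨j, hj⟩ := hi
  set i₀ := i - m j • Pi.single j 1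
  have hi₀ : i₀ + m j • Pi.single j 1 = i := tsub_add_cancel_of_le fun j' ↦ by
    rcases eq_or_ne j' j with rfl | hj'
    · simpa using hj
    · simp [hj']
  have hlt : ∀ k < m j, i₀ + k • Pi.single j 1 < i := fun k hk ↦ by
    rw [← hi₀, Pi.lt_def]
    refine ⟨fun j' ↦ ?_, j, by simpa using hk⟩
    simp only [Pi.add_apply, Pi.smul_apply, smul_eq_mul]
    gcongr
  have htop := hf j i₀
  rwa [Finset.sum_range_succ, hp, one_mul, hi₀, Finset.sum_eq_zero fun k hk ↦ ?_, zero_add] at htop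
  rw [ih _ (hlt k (Finset.mem_range.1 hk)), Pi.zero_apply, mul_zero]

end Recurrence

lemma LinearIndependent.existsUnique_sum_smul_eq {R M ι : Type*} [Semiring R] [AddCommMonoid M]
    [Module R M] [Fintype ι] {v : ι → M} (hv : LinearIndependent R v) {x : M}
    (hx : x ∈ Submodule.span R (Set.range v)) : ∃! c : ι → R, ∑ i, c i • v i = x := by
  obtain ⟨c, rfl⟩ := (Submodule.mem_span_range_iff_exists_fun R).1 hx
  refine ⟨c, rfl, fun c' hc' ↦ hv.fintypeLinearCombination_injective ?_⟩
  simpa only [Fintype.linearCombination_apply] using hc'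

section Field

variable [Field R] [Fintype ι] [DecidableEq ι] {m : ι → ℕ} {p : ι → R[X]}

lemma injective_restrict_recurrenceSolutions (hp : ∀ j, (p j).coeff (m j) = 1) :
    Function.Injective (LinearMap.funLeft R R (fun (l : ∀ j, Fin (m j)) j ↦ (l j : ℕ)) ∘ₗ
      (recurrenceSolutions m p).subtype) := by
  refine (injective_iff_map_eq_zero _).2 fun f hf ↦ Subtype.ext ?_
  refine eq_zero_of_mem_recurrenceSolutions hp f.2 fun i hi ↦ ?_
  exact congr_fun hf fun j ↦ ⟨i j, hi j⟩

lemma span_range_monomialFun_eq_recurrenceSolutions (hp : ∀ j, (p j).Monic)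
    (hdeg : ∀ j, (p j).natDegree = m j) {lam : (j : ι) → Fin (m j) → R}
    (hlam : ∀ j, Function.Injective (lam j)) (hroot : ∀ j l, (p j).IsRoot (lam j l)) :
    Submodule.span R (Set.range (monomialFun ∘ Pi.map lam)) = recurrenceSolutions m p := by
  have hle : Submodule.span R (Set.range (monomialFun ∘ Pi.map lam)) ≤ recurrenceSolutions m p :=
    Submodule.span_le.2 <| Set.range_subset_iff.2 fun l ↦
      monomialFun_mem_recurrenceSolutions (fun j ↦ (hdeg j).le) fun j ↦ hroot j (l j)
  have hinj := injective_restrict_recurrenceSolutions fun j ↦ hdeg j ▸ (hp j).coeff_natDegree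
  have := Module.Finite.of_injective _ hinj
  refine Submodule.eq_of_le_of_finrank_le hle ?_
  rw [finrank_span_eq_card (linearIndependent_monomialFun.comp _ (.piMap hlam))]
  simpa using LinearMap.finrank_le_finrank_of_injective hinj

end Field

/-- Binet formula in `d` variables: if `β : ℤ₊^d → ℝ` is recursively generated with
characteristic polynomials `p_j(x) = ∏_{l} (x - λ_{j,l})` having distinct roots, then
there are unique complex coefficients `c_{(l₁,…,l_d)}` with
`β_i = ∑_{l} c_l λ_{1,l₁}^{i₁} ⋯ λ_{d,l_d}^{i_d}`. -/
theorem binet_multivariable (d : ℕ) (m : Fin d → ℕ) (β : (Fin d → ℕ) → ℝ)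
    (lam : (j : Fin d) → Fin (m j) → ℂ)
    (hdist : ∀ j, Function.Injective (lam j))
    (hrec : ∀ j : Fin d, ∀ i : Fin d → ℕ,
      ∑ k ∈ Finset.range (m j + 1),
        (∏ l : Fin (m j), (X - C (lam j l))).coeff k
          * (β (i + k • Pi.single j 1) : ℂ) = 0) :
    ∃! c : ((j : Fin d) → Fin (m j)) → ℂ,
      ∀ i : Fin d → ℕ,
        (β i : ℂ) = ∑ l : (j : Fin d) → Fin (m j), c l * ∏ j : Fin d, lam j (l j) ^ i j := by
  have hspan := span_range_monomialFun_eq_recurrenceSolutions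
    (fun j ↦ monic_prod_X_sub_C (lam j) Finset.univ) (by simp) hdist
    fun j l ↦ by simp [eval_prod, Finset.prod_eq_zero (Finset.mem_univ l)]
  have hβ : (fun i ↦ (β i : ℂ)) ∈ recurrenceSolutions m fun j ↦ ∏ l, (X - C (lam j l)) := hrec
  refine existsUnique_congr (fun c ↦ ?_) |>.1 <|
    (linearIndependent_monomialFun.comp _ (.piMap hdist)).existsUnique_sum_smul_eq (hspan ▸ hβ)
  simp [funext_iff, Finset.sum_apply, monomialFun, eq_comm]
end

section
/- Let μ = ∑_{l∈I} c_l δ_{λ_l} be a finitely atomic measure on ℝ^d with distinct atoms λ_l ∈ ℝ^d and weights c_l ∈ ℝ, and let β_i = ∑_{l∈I} c_l λ_l^i for i ∈ ℤ₊^d (where λ^i = λ₁^{i₁}⋯λ_d^{i_d}). If M(β) is positive semidefinite, then c_l ≥ 0 for every l ∈ I. Consequently if all c_l ≠ 0, then all c_l > 0 and μ is a positive measure. -/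
/-!
Evaluating the moment form of `β` at the coefficients of a polynomial `p` gives
`∑ₛ c_s p(λ_s)²`. Plugging in a Lagrange polynomial `L_l`, which is `1` at `λ_l` and `0` at every
other atom, isolates `c_l = L_lᵀ M(β) L_l ≥ 0`.
-/

open MvPolynomial

namespace MvPolynomial

variable {σ ι R : Type*} [Fintype ι]

theorem sum_coeff_mul_coeff_mul_moment_eq [Fintype σ] [CommSemiring R] (c : ι → R)
    (lam : ι → σ → R) (β : (σ →₀ ℕ) → R)
    (hβ : ∀ i : σ →₀ ℕ, β i = ∑ l : ι, c l * ∏ t : σ, lam l t ^ i t)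
    (p : MvPolynomial σ R) :
    ∑ i ∈ p.support, ∑ j ∈ p.support, coeff i p * coeff j p * β (i + j)
      = ∑ s : ι, c s * eval (lam s) p ^ 2 := by
  simp only [hβ, eval_eq', sq, Finset.mul_sum, Finset.sum_mul,
    Finsupp.add_apply, pow_add, Finset.prod_mul_distrib]
  rw [Finset.sum_congr rfl fun i _ => Finset.sum_comm, Finset.sum_comm]
  refine Finset.sum_congr rfl fun s _ => Finset.sum_congr rfl fun i _ =>
    Finset.sum_congr rfl fun j _ => ?_
  ring

variable {K : Type*} [Field K]

theorem exists_eval_eq_one_and_eval_eq_zero {x y : σ → K} (hxy : x ≠ y) :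
    ∃ q : MvPolynomial σ K, eval x q = 1 ∧ eval y q = 0 := by
  obtain ⟨t, ht⟩ := Function.ne_iff.mp hxy
  refine ⟨C (x t - y t)⁻¹ * (X t - C (y t)), ?_, by simp⟩
  simp [inv_mul_cancel₀ (sub_ne_zero.mpr ht)]

theorem exists_lagrange_of_injective {lam : ι → σ → K} (hlam : Function.Injective lam) (l : ι) :
    ∃ p : MvPolynomial σ K, eval (lam l) p = 1 ∧ ∀ s ≠ l, eval (lam s) p = 0 := by
  have factor (s : ι) :
      ∃ q : MvPolynomial σ K, eval (lam l) q = 1 ∧ (s ≠ l → eval (lam s) q = 0) := by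
    by_cases hs : s = l
    · exact ⟨1, map_one _, fun h => absurd hs h⟩
    · obtain ⟨q, hql, hqs⟩ := exists_eval_eq_one_and_eval_eq_zero (hlam.ne (Ne.symm hs))
      exact ⟨q, hql, fun _ => hqs⟩
  choose q hql hqs using factor
  refine ⟨∏ s, q s, by simp [map_prod, hql], fun s hs => ?_⟩
  rw [map_prod]
  exact Finset.prod_eq_zero (Finset.mem_univ s) (hqs s hs)

end MvPolynomial

theorem nonneg_of_forall_sum_mul_eval_sq_nonneg {σ ι K : Type*} [Fintype ι] [Field K]
    [LinearOrder K] {c : ι → K} {lam : ι → σ → K} (hlam : Function.Injective lam)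
    (h : ∀ p : MvPolynomial σ K, 0 ≤ ∑ s : ι, c s * eval (lam s) p ^ 2) (l : ι) : 0 ≤ c l := by
  obtain ⟨p, hpl, hps⟩ := exists_lagrange_of_injective hlam l
  have := h p
  rwa [Finset.sum_eq_single_of_mem l (Finset.mem_univ l) fun s _ hs => by simp [hps s hs],
    hpl, one_pow, mul_one] at this

/-- If `β_i = ∑_l c_l λ_l^i` for distinct atoms `λ_l ∈ ℝ^d` and real weights `c_l`,
and the moment matrix `M(β)` is positive semidefinite, then every `c_l ≥ 0`;
consequently, if all `c_l ≠ 0` then all `c_l > 0`. -/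
theorem atomic_weights_nonneg (d : ℕ) (ι : Type) [Fintype ι]
    (c : ι → ℝ) (lam : ι → Fin d → ℝ) (hdist : Function.Injective lam)
    (β : (Fin d →₀ ℕ) → ℝ)
    (hβ : ∀ i : Fin d →₀ ℕ, β i = ∑ l : ι, c l * ∏ t : Fin d, lam l t ^ i t)
    (hpsd : ∀ p : MvPolynomial (Fin d) ℝ,
      0 ≤ ∑ i ∈ p.support, ∑ j ∈ p.support, coeff i p * coeff j p * β (i + j)) :
    (∀ l : ι, 0 ≤ c l) ∧ ((∀ l : ι, c l ≠ 0) → ∀ l : ι, 0 < c l) := by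
  have hc : ∀ l, 0 ≤ c l := nonneg_of_forall_sum_mul_eval_sq_nonneg hdist fun p => by
    simpa only [sum_coeff_mul_coeff_mul_moment_eq c lam β hβ p] using hpsd p
  exact ⟨hc, fun hne l => (hc l).lt_of_ne' (hne l)⟩
end

section
/- Let β : ℤ₊^d → ℝ be a multisequence such that the moment matrix M(β) is positive semidefinite and has finite rank (as a bilinear form on polynomials). Then β is recursively generated: for each l ∈ {1,…,d} there exists a monic univariate polynomial p_l such that ∑_k (p_l)_k β_{i+kε_l} = 0 for all i ∈ ℤ₊^d. -/
/-!
The columns of `M(β)` indexed by the powers `x_l ^ k` all lie in the finite-dimensional column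
space, so infinitely many of them cannot be linearly independent. A nontrivial dependency among
them is a nonzero polynomial in `x_l`, and dividing by its leading coefficient makes it monic.
-/

section

open Polynomial

variable {K M : Type*} [Field K] [AddCommGroup M] [Module K M]

theorem Polynomial.exists_ne_zero_sum_smul_eq_zero (V : Submodule K M) [FiniteDimensional K V]
    {f : ℕ → M} (hf : ∀ k, f k ∈ V) : ∃ q : K[X], q ≠ 0 ∧ q.sum (fun k a => a • f k) = 0 := by
  let L : K[X] →ₗ[K] V := (lsum fun k => LinearMap.toSpanSingleton K M (f k)).codRestrict V
    fun p => Submodule.sum_mem _ fun k _ => V.smul_mem _ (hf k)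
  have hL : ¬ Function.Injective L := fun h => Polynomial.not_finite (Module.Finite.of_injective L h)
  rw [injective_iff_map_eq_zero] at hL
  push Not at hL
  obtain ⟨q, hq, hq0⟩ := hL
  exact ⟨q, hq0, congrArg Subtype.val hq⟩

theorem Polynomial.exists_monic_sum_range_coeff_smul_eq_zero (V : Submodule K M)
    [FiniteDimensional K V] {f : ℕ → M} (hf : ∀ k, f k ∈ V) :
    ∃ p : K[X], p.Monic ∧ ∑ k ∈ Finset.range (p.natDegree + 1), p.coeff k • f k = 0 := by
  obtain ⟨q, hq0, hq⟩ := exists_ne_zero_sum_smul_eq_zero V hf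
  refine ⟨C q.leadingCoeff⁻¹ * q,
    monic_C_mul_of_mul_leadingCoeff_eq_one (inv_mul_cancel₀ (leadingCoeff_ne_zero.2 hq0)), ?_⟩
  rw [← sum_over_range (f := fun k a => a • f k) _ (fun _ => zero_smul K _), ← smul_eq_C_mul,
    sum_smul_index (f := fun k a => a • f k) _ _ (fun _ => zero_smul K _)]
  rw [sum_def] at hq
  simp_rw [sum_def, mul_smul, ← Finset.smul_sum, hq, smul_zero]

end

open MvPolynomial

theorem finiteRank_psd_implies_recursive_general (d : ℕ) (β : (Fin d →₀ ℕ) → ℝ)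
    (hfin : Module.Finite ℝ
      (Submodule.span ℝ
        (Set.range fun j : Fin d →₀ ℕ => (fun i : Fin d →₀ ℕ => β (i + j))))) :
    ∀ l : Fin d, ∃ p : Polynomial ℝ, p.Monic ∧
      ∀ i : Fin d →₀ ℕ,
        ∑ k ∈ Finset.range (p.natDegree + 1),
          p.coeff k * β (i + Finsupp.single l k) = 0 := by
  intro l
  have hcolumn : ∀ k, (fun i => β (i + Finsupp.single l k)) ∈
      Submodule.span ℝ (Set.range fun j i => β (i + j)) :=
    fun k => Submodule.subset_span ⟨Finsupp.single l k, rfl⟩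
  obtain ⟨p, hp, hrec⟩ := Polynomial.exists_monic_sum_range_coeff_smul_eq_zero _ hcolumn
  exact ⟨p, hp, fun i => by simpa using congrFun hrec i⟩

/-- If the moment matrix `M(β)` is positive semidefinite and of finite rank (its column
space is finite dimensional), then `β` is recursively generated: for each `l` there is a
monic univariate polynomial `p_l` with `∑_k (p_l)_k β_{i+kε_l} = 0` for all `i`. -/
theorem finiteRank_psd_implies_recursive (d : ℕ) (β : (Fin d →₀ ℕ) → ℝ)
    (hpsd : ∀ p : MvPolynomial (Fin d) ℝ,
      0 ≤ ∑ i ∈ p.support, ∑ j ∈ p.support, coeff i p * coeff j p * β (i + j))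
    (hfin : Module.Finite ℝ
      (Submodule.span ℝ
        (Set.range fun j : Fin d →₀ ℕ => (fun i : Fin d →₀ ℕ => β (i + j))))) :
    ∀ l : Fin d, ∃ p : Polynomial ℝ, p.Monic ∧
      ∀ i : Fin d →₀ ℕ,
        ∑ k ∈ Finset.range (p.natDegree + 1),
          p.coeff k * β (i + Finsupp.single l k) = 0 :=
  finiteRank_psd_implies_recursive_general d β hfin
end

section
/- Let β_i = ∑_{l∈I} c_l λ_l^i with c_l > 0 and distinct λ_l ∈ ℝ^d, and let q ∈ ℝ[x₁,…,x_d]. If the localizing moment matrix M(q*β), with entries (q*β)_{i+j}, is positive semidefinite, then q(λ_l) ≥ 0 for every l ∈ I; i.e. the support of the measure ∑ c_l δ_{λ_l} is contained in {x ∈ ℝ^d : q(x) ≥ 0}. -/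
/-!
Evaluating at the atoms, the localizing form is a weighted sum of squares,
`∑ p_i p_j (q*β)_{i+j} = ∑_l c_l q(λ_l) p(λ_l)²`. Testing it on a polynomial that is `1` at
`λ_l` and `0` at the other atoms leaves `c_l q(λ_l) ≥ 0`, and `c_l > 0`.
-/

open MvPolynomial Finset

section AtomicMoments

variable {R σ ι : Type*} [CommRing R] [Fintype σ] [Fintype ι]

theorem prod_pow_add_apply (x : σ → R) (a b : σ →₀ ℕ) :
    ∏ t, x t ^ (a + b) t = (∏ t, x t ^ a t) * ∏ t, x t ^ b t := by
  simp only [Finsupp.add_apply, pow_add, prod_mul_distrib]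

theorem sum_coeff_mul_atomic_moment_add (c : ι → R) (lam : ι → σ → R) (q : MvPolynomial σ R)
    (k : σ →₀ ℕ) :
    ∑ γ ∈ q.support, coeff γ q * ∑ s, c s * ∏ t, lam s t ^ (γ + k) t
      = ∑ s, c s * eval (lam s) q * ∏ t, lam s t ^ k t := by
  simp_rw [prod_pow_add_apply, eval_eq', mul_sum, sum_mul]
  rw [Finset.sum_comm]
  exact Finset.sum_congr rfl fun s _ => Finset.sum_congr rfl fun γ _ => by ring

theorem sum_sum_coeff_mul_atomic_moment (w : ι → R) (lam : ι → σ → R) (p : MvPolynomial σ R) :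
    ∑ i ∈ p.support, ∑ j ∈ p.support,
        coeff i p * coeff j p * ∑ s, w s * ∏ t, lam s t ^ (i + j) t
      = ∑ s, w s * eval (lam s) p ^ 2 := by
  simp_rw [sq, eval_eq', Finset.sum_mul_sum, prod_pow_add_apply, mul_sum]
  conv_rhs => rw [Finset.sum_comm]
  refine Finset.sum_congr rfl fun i _ => ?_
  conv_rhs => rw [Finset.sum_comm]
  exact Finset.sum_congr rfl fun j _ => Finset.sum_congr rfl fun s _ => by ring

end AtomicMoments

theorem MvPolynomial.exists_eval_eq_one_and_eval_eq_zero_s17 {K σ ι : Type*} [Field K] [Fintype ι]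
    (lam : ι → σ → K) (hlam : Function.Injective lam) (l : ι) :
    ∃ L : MvPolynomial σ K, eval (lam l) L = 1 ∧ ∀ s ≠ l, eval (lam s) L = 0 := by
  classical
  have hcoord : ∀ s, s ≠ l → ∃ t, lam s t ≠ lam l t := fun s hs => by
    by_contra! h
    exact hs (hlam (_root_.funext h))
  choose t ht using hcoord
  refine ⟨∏ s, if hs : s = l then 1 else
      C (lam l (t s hs) - lam s (t s hs))⁻¹ * (X (t s hs) - C (lam s (t s hs))),
    ?_, fun s hs => ?_⟩
  · rw [map_prod]
    refine prod_eq_one fun s _ => ?_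
    by_cases hs : s = l
    · simp [hs]
    · have hne := sub_ne_zero.2 (ht s hs).symm
      simp [hs, hne]
  · rw [map_prod]
    exact prod_eq_zero (mem_univ s) (by simp [hs])

/-- If `β_i = ∑_l c_l λ_l^i` with `c_l > 0` and distinct `λ_l ∈ ℝ^d`, and the localizing
moment matrix `M(q*β)` is positive semidefinite, then `q(λ_l) ≥ 0` for every atom; i.e.
the support of the measure is contained in `{x : q(x) ≥ 0}`. -/
theorem localizing_psd_implies_support (d : ℕ) (ι : Type) [Fintype ι]
    (c : ι → ℝ) (hc : ∀ l, 0 < c l)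
    (lam : ι → Fin d → ℝ) (hdist : Function.Injective lam)
    (β : (Fin d →₀ ℕ) → ℝ)
    (hβ : ∀ i : Fin d →₀ ℕ, β i = ∑ l : ι, c l * ∏ t : Fin d, lam l t ^ i t)
    (q : MvPolynomial (Fin d) ℝ)
    (hpsd : ∀ p : MvPolynomial (Fin d) ℝ,
      0 ≤ ∑ i ∈ p.support, ∑ j ∈ p.support,
            coeff i p * coeff j p *
              (∑ γ ∈ q.support, coeff γ q * β (γ + (i + j)))) :
    ∀ l : ι, 0 ≤ eval (lam l) q := by
  intro l
  obtain ⟨L, hLl, hLs⟩ := exists_eval_eq_one_and_eval_eq_zero_s17 lam hdist l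
  have h := hpsd L
  simp_rw [hβ, sum_coeff_mul_atomic_moment_add, sum_sum_coeff_mul_atomic_moment] at h
  rw [sum_eq_single l (fun s _ hs => by simp [hLs s hs]) (by simp), hLl, one_pow, mul_one] at h
  exact nonneg_of_mul_nonneg_right h (hc l)
end
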